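/- arXiv:0907.4858 — 4 statements merged into one kernel-verified Lean document; each statement's English description precedes it below -/
import Mathlib

section
/- Suppose ω(r,s) = ζ₁(r) + ζ₂(s) where ζ₁, ζ₂ are twice differentiable, ζ₁''(r)(r²+1) + c₁ exp(-ζ₁(r)/c) + 2(r ζ₁'(r) - c) = 0 for all r, and ζ₂''(s) + K c₁ exp(ζ₂(s)/c) = 0 for all s, with c ≠ 0. Then ω satisfies ω_ss = K exp(ω/c) ((1+r²) ω_rr + 2r ω_r - 2c). -/
open Real

theorem stmt_8_general (c c₁ K : ℝ) (ζ₁ ζ₂ : ℝ → ℝ)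
    (hode₁ : ∀ r, deriv (deriv ζ₁) r * (r ^ 2 + 1)
        + c₁ * Real.exp (-(ζ₁ r) / c) + 2 * (r * deriv ζ₁ r - c) = 0)
    (hode₂ : ∀ s, deriv (deriv ζ₂) s + K * c₁ * Real.exp (ζ₂ s / c) = 0) :
    let ω : ℝ → ℝ → ℝ := fun r s => ζ₁ r + ζ₂ s
    ∀ r s : ℝ,
      deriv (deriv (fun s' => ω r s')) s =
        K * Real.exp (ω r s / c) *
          ((1 + r ^ 2) * deriv (deriv (fun r' => ω r' s)) r
            + 2 * r * deriv (fun r' => ω r' s) r - 2 * c) := by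
  intro ω r s
  simp only [ω, deriv_const_add', deriv_add_const']
  have hexp : exp ((ζ₁ r + ζ₂ s) / c) * exp (-(ζ₁ r) / c) = exp (ζ₂ s / c) := by
    rw [← exp_add]
    ring_nf
  linear_combination hode₂ s - K * exp ((ζ₁ r + ζ₂ s) / c) * hode₁ r + K * c₁ * hexp

theorem stmt_8 (c c₁ K : ℝ) (hc : c ≠ 0) (ζ₁ ζ₂ : ℝ → ℝ)
    (h₁ : Differentiable ℝ ζ₁) (h₁' : Differentiable ℝ (deriv ζ₁))
    (h₂ : Differentiable ℝ ζ₂) (h₂' : Differentiable ℝ (deriv ζ₂))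
    (hode₁ : ∀ r, deriv (deriv ζ₁) r * (r ^ 2 + 1)
        + c₁ * Real.exp (-(ζ₁ r) / c) + 2 * (r * deriv ζ₁ r - c) = 0)
    (hode₂ : ∀ s, deriv (deriv ζ₂) s + K * c₁ * Real.exp (ζ₂ s / c) = 0) :
    let ω : ℝ → ℝ → ℝ := fun r s => ζ₁ r + ζ₂ s
    ∀ r s : ℝ,
      deriv (deriv (fun s' => ω r s')) s =
        K * Real.exp (ω r s / c) *
          ((1 + r ^ 2) * deriv (deriv (fun r' => ω r' s)) r
            + 2 * r * deriv (fun r' => ω r' s) r - 2 * c) :=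
  stmt_8_general c c₁ K ζ₁ ζ₂ hode₁ hode₂
end

section
/- Let c ≠ 0, K ≠ 0. If ω : ℝ² → ℝ is twice differentiable and satisfies ω_ss(r,s) = K exp(ω(r,s)/c)((1+r²)ω_rr(r,s) + 2r ω_r(r,s) - 2c), then the function u(x,y,t) = ω(y/x, t) + 2c ln x satisfies the wave equation u_tt = K exp(u/c)(u_xx + u_yy) for all x > 0. -/
/-!
With `r = y / x` and `g = ω(·, t)`, the function `g(y/x) + 2c log x` has `(x, y)`-Laplacian
`((1 + r²) g''(r) + 2r g'(r) - 2c) / x²`, while `exp(u/c) = x² exp(ω/c)` and `u_tt = ω_ss`.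
The factors `x²` cancel, so the reduced equation at `(y/x, t)` is the wave equation for `u`.
-/

open Real Filter Topology

section

variable {𝕜 F : Type*} [NontriviallyNormedField 𝕜] [NormedAddCommGroup F] [NormedSpace 𝕜 F]

theorem deriv_deriv_eq_of_eventually_hasDerivAt {f f' : 𝕜 → F} {f'' : F} {x : 𝕜}
    (hf : ∀ᶠ z in 𝓝 x, HasDerivAt f (f' z) z) (hf' : HasDerivAt f' f'' x) :
    deriv (deriv f) x = f'' := by
  have h : deriv f =ᶠ[𝓝 x] f' := hf.mono fun _ hz => hz.deriv
  rw [h.deriv_eq, hf'.deriv]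

theorem deriv_deriv_comp_div_const (g : 𝕜 → F) (a y : 𝕜) :
    deriv (deriv fun y => g (y / a)) y = (a ^ 2)⁻¹ • deriv (deriv g) (y / a) := by
  simp only [div_eq_inv_mul]
  rw [funext (deriv_comp_mul_left a⁻¹ g), deriv_fun_const_smul_field, deriv_comp_mul_left,
    smul_smul, sq, mul_inv]

end

theorem hasDerivAt_const_div {a x : ℝ} (hx : x ≠ 0) :
    HasDerivAt (fun z => a / z) (-(a / x) / x) x := by
  refine ((hasDerivAt_const x a).div (hasDerivAt_id x) hx).congr_deriv ?_
  simp only [id]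
  ring

theorem deriv_deriv_comp_const_div_add_log {g : ℝ → ℝ} (hg : ContDiff ℝ 2 g) (a b : ℝ)
    {x : ℝ} (hx : x ≠ 0) :
    deriv (deriv fun z => g (a / z) + b * log z) x =
      ((a / x) ^ 2 * deriv (deriv g) (a / x) + 2 * (a / x) * deriv g (a / x) - b) / x ^ 2 := by
  have hg' : ∀ r, HasDerivAt g (deriv g r) r :=
    fun r => ((hg.differentiable (by norm_num)) r).hasDerivAt
  have hg'' : ∀ r, HasDerivAt (deriv g) (deriv (deriv g) r) r :=
    fun r => (hg.differentiable_deriv_two r).hasDerivAt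
  have hfirst : ∀ᶠ z in 𝓝 x, HasDerivAt (fun z => g (a / z) + b * log z)
      ((b - a / z * deriv g (a / z)) / z) z := by
    filter_upwards [isOpen_ne.mem_nhds hx] with z hz
    refine (((hg' (a / z)).comp z (hasDerivAt_const_div hz)).add
      ((hasDerivAt_log hz).const_mul b)).congr_deriv ?_
    field_simp
    ring
  refine deriv_deriv_eq_of_eventually_hasDerivAt hfirst ?_
  have hr : HasDerivAt (fun z => a / z) (-(a / x) / x) x := hasDerivAt_const_div hx
  refine (((hasDerivAt_const x b).sub (hr.mul ((hg'' (a / x)).comp x hr))).div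
    (hasDerivAt_id x) hx).congr_deriv ?_
  simp only [id, Pi.sub_apply, Pi.mul_apply, Function.comp_apply]
  field_simp
  ring

theorem deriv_deriv_add_deriv_deriv_comp_div_add_log {g : ℝ → ℝ} (hg : ContDiff ℝ 2 g)
    (b y : ℝ) {x : ℝ} (hx : x ≠ 0) :
    deriv (deriv fun x' => g (y / x') + b * log x') x +
        deriv (deriv fun y' => g (y' / x) + b * log x) y =
      ((1 + (y / x) ^ 2) * deriv (deriv g) (y / x) + 2 * (y / x) * deriv g (y / x) - b) /
        x ^ 2 := by
  rw [deriv_deriv_comp_const_div_add_log hg y b hx, deriv_add_const',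
    deriv_deriv_comp_div_const, smul_eq_mul]
  ring

theorem exp_div_add_mul_log {c : ℝ} (hc : c ≠ 0) (w : ℝ) {x : ℝ} (hx : 0 < x) :
    exp ((w + 2 * c * log x) / c) = exp (w / c) * x ^ 2 := by
  rw [add_div, exp_add, mul_div_right_comm, mul_div_cancel_right₀ _ hc, two_mul, exp_add,
    exp_log hx, sq]

theorem stmt_9_general (c K : ℝ) (hc : c ≠ 0) (ω : ℝ → ℝ → ℝ)
    (hω : ContDiff ℝ 2 (fun p : ℝ × ℝ => ω p.1 p.2))
    (hred : ∀ r s : ℝ,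
      deriv (deriv (fun s' => ω r s')) s =
        K * Real.exp (ω r s / c) *
          ((1 + r ^ 2) * deriv (deriv (fun r' => ω r' s)) r
            + 2 * r * deriv (fun r' => ω r' s) r - 2 * c)) :
    let u : ℝ → ℝ → ℝ → ℝ := fun x y t => ω (y / x) t + 2 * c * Real.log x
    ∀ x y t : ℝ, 0 < x →
      deriv (deriv (fun t' => u x y t')) t =
        K * Real.exp (u x y t / c) *
          (deriv (deriv (fun x' => u x' y t)) x
            + deriv (deriv (fun y' => u x y' t)) y) := by
  intro u x y t hx
  have hslice : ContDiff ℝ 2 fun r => ω r t := hω.comp (contDiff_id.prodMk contDiff_const)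
  have hutt : deriv (deriv fun t' => u x y t') t = deriv (deriv fun s => ω (y / x) s) t := by
    simp only [u, deriv_add_const']
  rw [hutt, hred]
  simp only [u]
  rw [exp_div_add_mul_log hc _ hx, deriv_deriv_add_deriv_deriv_comp_div_add_log hslice _ _ hx.ne']
  field_simp

theorem stmt_9 (c K : ℝ) (hc : c ≠ 0) (hK : K ≠ 0) (ω : ℝ → ℝ → ℝ)
    (hω : ContDiff ℝ 2 (fun p : ℝ × ℝ => ω p.1 p.2))
    (hred : ∀ r s : ℝ,
      deriv (deriv (fun s' => ω r s')) s =
        K * Real.exp (ω r s / c) *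
          ((1 + r ^ 2) * deriv (deriv (fun r' => ω r' s)) r
            + 2 * r * deriv (fun r' => ω r' s) r - 2 * c)) :
    let u : ℝ → ℝ → ℝ → ℝ := fun x y t => ω (y / x) t + 2 * c * Real.log x
    ∀ x y t : ℝ, 0 < x →
      deriv (deriv (fun t' => u x y t')) t =
        K * Real.exp (u x y t / c) *
          (deriv (deriv (fun x' => u x' y t)) x
            + deriv (deriv (fun y' => u x y' t)) y) :=
  stmt_9_general c K hc ω hω hred
end

section
/- Let c, L be constants with L ≠ 0, and suppose ς₁, ς₂ : ℝ → ℝ are twice differentiable with ς₁''(p) - c ς₁(p)² = 0 for all p and (q²+1) ς₂''(q) - 2q ς₂'(q) + 2ς₂(q) - c/L = 0 for all q. Then ϑ(p,q) = ς₁(p)·ς₂(q) satisfies ϑ_pp = L ϑ ((q²+1) ϑ_qq - 2q ϑ_q + 2ϑ). -/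
/-! Both sides are multiples of `ς₂ q`: the left one is `c ς₁(p)² ς₂(q)` by the first equation, and
the right one is `L ς₁(p)² ς₂(q) · c / L` by the second, since the operator
`g ↦ (q² + 1) g'' - 2 q g' + 2 g` commutes with multiplication by the constant `ς₁ p`. -/

theorem stmt_11_general (c L : ℝ) (hL : L ≠ 0) (ς₁ ς₂ : ℝ → ℝ)
    (hode₁ : ∀ p, deriv (deriv ς₁) p - c * (ς₁ p) ^ 2 = 0)
    (hode₂ : ∀ q, (q ^ 2 + 1) * deriv (deriv ς₂) q - 2 * q * deriv ς₂ q
        + 2 * ς₂ q - c / L = 0) :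
    let ϑ : ℝ → ℝ → ℝ := fun p q => ς₁ p * ς₂ q
    ∀ p q : ℝ,
      deriv (deriv (fun p' => ϑ p' q)) p =
        L * ϑ p q * ((q ^ 2 + 1) * deriv (deriv (fun q' => ϑ p q')) q
          - 2 * q * deriv (fun q' => ϑ p q') q + 2 * ϑ p q) := by
  intro ϑ p q
  have hς₁ : deriv (deriv ς₁) p = c * ς₁ p ^ 2 := by linarith [hode₁ p]
  have hς₂ : (q ^ 2 + 1) * deriv (deriv ς₂) q - 2 * q * deriv ς₂ q + 2 * ς₂ q = c / L := by
    linarith [hode₂ q]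
  simp only [ϑ, deriv_mul_const_field', deriv_const_mul_field']
  calc deriv (deriv ς₁) p * ς₂ q = c * ς₁ p ^ 2 * ς₂ q := by rw [hς₁]
    _ = L * (ς₁ p * ς₂ q) * (ς₁ p * (c / L)) := by field_simp
    _ = L * (ς₁ p * ς₂ q) * ((q ^ 2 + 1) * (ς₁ p * deriv (deriv ς₂) q)
          - 2 * q * (ς₁ p * deriv ς₂ q) + 2 * (ς₁ p * ς₂ q)) := by rw [← hς₂]; ring

theorem stmt_11 (c L : ℝ) (hL : L ≠ 0) (ς₁ ς₂ : ℝ → ℝ)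
    (h₁ : Differentiable ℝ ς₁) (h₁' : Differentiable ℝ (deriv ς₁))
    (h₂ : Differentiable ℝ ς₂) (h₂' : Differentiable ℝ (deriv ς₂))
    (hode₁ : ∀ p, deriv (deriv ς₁) p - c * (ς₁ p) ^ 2 = 0)
    (hode₂ : ∀ q, (q ^ 2 + 1) * deriv (deriv ς₂) q - 2 * q * deriv ς₂ q
        + 2 * ς₂ q - c / L = 0) :
    let ϑ : ℝ → ℝ → ℝ := fun p q => ς₁ p * ς₂ q
    ∀ p q : ℝ,
      deriv (deriv (fun p' => ϑ p' q)) p =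
        L * ϑ p q * ((q ^ 2 + 1) * deriv (deriv (fun q' => ϑ p q')) q
          - 2 * q * deriv (fun q' => ϑ p q') q + 2 * ϑ p q) :=
  stmt_11_general c L hL ς₁ ς₂ hode₁ hode₂
end

section
/- For c ≠ 0 and any ε ∈ ℝ, if u(x,y,t) solves u_tt = K e^(u/c)(u_xx + u_yy), then ũ(x,y,t) = u(x, y, e^(-ε) t) - 2cε also solves the same equation (time-scaling symmetry generated by v₄ = t∂_t - 2c∂_u). -/
/-!
Rescaling time by `e^{-ε}` multiplies `u_tt` by `e^{-2ε}` and leaves `u_xx`, `u_yy` unchanged,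
while the shift `u ↦ u - 2cε` multiplies the coefficient `e^{u/c}` by the same factor `e^{-2ε}`.
-/

theorem deriv_deriv_comp_mul_left {𝕜 E : Type*} [NontriviallyNormedField 𝕜]
    [NormedAddCommGroup E] [NormedSpace 𝕜 E] (c : 𝕜) (f : 𝕜 → E) (x : 𝕜) :
    deriv (deriv (f <| c * ·)) x = c ^ 2 • deriv (deriv f) (c * x) := by
  have h : deriv (f <| c * ·) = fun y => c • deriv f (c * y) :=
    funext (deriv_comp_mul_left c f)
  rw [h, deriv_fun_const_smul_field, deriv_comp_mul_left, smul_smul, sq]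

theorem Real.exp_sub_two_mul_mul_div (w c ε : ℝ) (hc : c ≠ 0) :
    Real.exp ((w - 2 * c * ε) / c) = Real.exp (-ε) ^ 2 * Real.exp (w / c) := by
  rw [← Real.exp_nat_mul, ← Real.exp_add]
  congr 1
  field_simp
  ring

theorem stmt_15_general (K c ε : ℝ) (hc : c ≠ 0) (u : ℝ → ℝ → ℝ → ℝ)
    (hsol : ∀ x y t : ℝ,
      deriv (deriv (fun t' => u x y t')) t =
        K * Real.exp (u x y t / c) *
          (deriv (deriv (fun x' => u x' y t)) x
            + deriv (deriv (fun y' => u x y' t)) y)) :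
    let v : ℝ → ℝ → ℝ → ℝ :=
      fun x y t => u x y (Real.exp (-ε) * t) - 2 * c * ε
    ∀ x y t : ℝ,
      deriv (deriv (fun t' => v x y t')) t =
        K * Real.exp (v x y t / c) *
          (deriv (deriv (fun x' => v x' y t)) x
            + deriv (deriv (fun y' => v x y' t)) y) := by
  intro v x y t
  simp only [v, deriv_sub_const_fun]
  rw [deriv_deriv_comp_mul_left (Real.exp (-ε)) (u x y), hsol,
    Real.exp_sub_two_mul_mul_div _ _ _ hc, smul_eq_mul]
  ring

theorem stmt_15 (K c ε : ℝ) (hc : c ≠ 0) (u : ℝ → ℝ → ℝ → ℝ)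
    (hu : ContDiff ℝ 2 (fun p : ℝ × ℝ × ℝ => u p.1 p.2.1 p.2.2))
    (hsol : ∀ x y t : ℝ,
      deriv (deriv (fun t' => u x y t')) t =
        K * Real.exp (u x y t / c) *
          (deriv (deriv (fun x' => u x' y t)) x
            + deriv (deriv (fun y' => u x y' t)) y)) :
    let v : ℝ → ℝ → ℝ → ℝ :=
      fun x y t => u x y (Real.exp (-ε) * t) - 2 * c * ε
    ∀ x y t : ℝ,
      deriv (deriv (fun t' => v x y t')) t =
        K * Real.exp (v x y t / c) *
          (deriv (deriv (fun x' => v x' y t)) x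
            + deriv (deriv (fun y' => v x y' t)) y) :=
  stmt_15_general K c ε hc u hsol
end
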